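/- If Assumptions (Ã), (B̃), and (C̃) hold, then for every λ ∈ ℝ \ (closure(Δ̃((0,1])) ∪ {d̃₀}): lim_{x→0+} x (∂π̃/∂x)(x,λ)/π̃(x,λ) = 2; consequently, the limit lim_{t→∞} W(t) exists and is finite, lim_{t→∞} W'(t) = 0, and Im ρ̃₀(λ) = 1 + lim_{t→∞} W(t). -/

import Mathlib

set_option synthInstance.maxHeartbeats 1000000
set_option maxHeartbeats 1000000

noncomputable section
open MeasureTheory Set Filter Topology

namespace PaperEss

/-- The weight `w = w₁ w₂`. -/
def ww (w₁ w₂ : ℝ → ℝ) (x : ℝ) : ℝ := w₁ x * w₂ x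

/-- `π̃(x,λ) = (w₂/w₁) p̃ − |b̃|²/(d̃ − λ)`. -/
def pirT (pt : ℝ → ℝ) (bt : ℝ → ℂ) (dt : ℝ → ℝ) (w₁ w₂ : ℝ → ℝ) (l : ℂ) (x : ℝ) : ℂ :=
  ((w₂ x / w₁ x * pt x : ℝ) : ℂ) - (‖bt x‖ : ℂ) ^ 2 / ((dt x : ℂ) - l)

/-- `ρ̃(x,λ) = −2 Im(b̃ c̃̄)/(d̃ − λ) + i (1/w) (d/dx)(w π̃)`. -/
def rhoT (pt : ℝ → ℝ) (bt ct : ℝ → ℂ) (dt : ℝ → ℝ) (w₁ w₂ : ℝ → ℝ) (l : ℂ) (x : ℝ) : ℂ :=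
  -(2 * ((bt x * (starRingEnd ℂ) (ct x)).im : ℂ)) / ((dt x : ℂ) - l)
    + Complex.I * ((ww w₁ w₂ x : ℝ) : ℂ)⁻¹ *
        deriv (fun s => ((ww w₁ w₂ s : ℝ) : ℂ) * pirT pt bt dt w₁ w₂ l s) x

/-- `κ̃(x,λ) = q̃ − λ − |c̃|²/(d̃−λ) + (1/w)(w b̃̄ c̃/(d̃−λ))′ − (p̃ w₂′)′/w₁`. -/
def kapT (pt qt : ℝ → ℝ) (bt ct : ℝ → ℂ) (dt : ℝ → ℝ) (w₁ w₂ : ℝ → ℝ) (l : ℂ) (x : ℝ) : ℂ :=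
  (qt x : ℂ) - l - (‖ct x‖ : ℂ) ^ 2 / ((dt x : ℂ) - l)
    + ((ww w₁ w₂ x : ℝ) : ℂ)⁻¹ *
        deriv (fun s => ((ww w₁ w₂ s : ℝ) : ℂ) * ((starRingEnd ℂ) (bt s) * ct s)
          / ((dt s : ℂ) - l)) x
    - ((deriv (fun s => pt s * deriv w₂ s) x / w₁ x : ℝ) : ℂ)

/-- `Δ̃(x) = d̃(x) − (w₁/w₂)|b̃|²/p̃`. -/
def DelT (pt : ℝ → ℝ) (bt : ℝ → ℂ) (dt : ℝ → ℝ) (w₁ w₂ : ℝ → ℝ) (x : ℝ) : ℝ :=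
  dt x - w₁ x / w₂ x * (‖bt x‖ ^ 2 / pt x)

/-- `W(t) = 1 + e^{−t} w′(e^{−t})/w(e^{−t})` with `w = w₁ w₂`. -/
def WT (w₁ w₂ : ℝ → ℝ) (t : ℝ) : ℝ :=
  1 + Real.exp (-t) * deriv (ww w₁ w₂) (Real.exp (-t)) / ww w₁ w₂ (Real.exp (-t))

/-- **Assumption (Ã)**: smoothness and positivity on `(0,1]`. -/
structure AssAT (pt qt dt : ℝ → ℝ) (bt ct : ℝ → ℂ) (w₁ w₂ : ℝ → ℝ) : Prop where
  hp : ContDiffOn ℝ 2 pt (Ioc 0 1)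
  hd : ContDiffOn ℝ 2 dt (Ioc 0 1)
  hb : ContDiffOn ℝ 2 bt (Ioc 0 1)
  hc : ContDiffOn ℝ 1 ct (Ioc 0 1)
  hq : ContinuousOn qt (Ioc 0 1)
  hppos : ∀ x ∈ Ioc (0 : ℝ) 1, 0 < pt x
  hw1 : ContDiffOn ℝ 2 w₁ (Ioc 0 1)
  hw2 : ContDiffOn ℝ 2 w₂ (Ioc 0 1)
  hwpos : ∀ x ∈ Ioo (0 : ℝ) 1, 0 < ww w₁ w₂ x

/-- **Assumption (B̃)**: `L` is the (possibly improper) limit of `d̃` at `0+` (B̃1);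
growth bounds (B̃2); boundedness conditions (B̃3a), (B̃3b). -/
structure AssBT (pt qt dt : ℝ → ℝ) (bt ct : ℝ → ℂ) (w₁ w₂ : ℝ → ℝ) (L : EReal) : Prop where
  hB1 : Tendsto (fun x => (dt x : EReal)) (nhdsWithin 0 (Ioi 0)) (nhds L)
  hB2 : ∃ β > (0 : ℝ), ∃ γ > (0 : ℝ), ∀ x ∈ Ioc (0 : ℝ) 1,
    ‖bt x‖ / x ≤ β * (|dt x| + 1) ∧ ‖ct x‖ ≤ γ * (|dt x| + 1)
  hB3a : ∃ l : ℝ, (l : EReal) ≠ L ∧ ∃ xl ∈ Ioo (0 : ℝ) 1, ∃ M : ℝ,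
    ∀ x ∈ Ioc (0 : ℝ) xl, ‖pirT pt bt dt w₁ w₂ (l : ℂ) x‖ / x ^ 2 ≤ M
  hB3b : ∀ l : ℝ, l ∉ closure (DelT pt bt dt w₁ w₂ '' Ioc 0 1) → (l : EReal) ≠ L →
    ∃ xl ∈ Ioo (0 : ℝ) 1, ∃ M : ℝ, ∀ x ∈ Ioc (0 : ℝ) xl,
      x ^ 2 / ‖pirT pt bt dt w₁ w₂ (l : ℂ) x‖ ≤ M ∧
      ‖rhoT pt bt ct dt w₁ w₂ (l : ℂ) x‖ / x ≤ M ∧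
      ‖kapT pt qt bt ct dt w₁ w₂ (l : ℂ) x‖ ≤ M

/-- **Assumption (C̃)**: existence of the finite limits `ρ̃₀(λ)`, `κ̃₀(λ)` (C̃1)
and of `lim x² w″/w` (C̃2). -/
structure AssCT (pt qt dt : ℝ → ℝ) (bt ct : ℝ → ℂ) (w₁ w₂ : ℝ → ℝ) (L : EReal) : Prop where
  hC1 : ∀ l : ℝ, l ∉ closure (DelT pt bt dt w₁ w₂ '' Ioc 0 1) → (l : EReal) ≠ L →
    (∃ z : ℂ, Tendsto (fun x : ℝ =>
        (x : ℂ) * rhoT pt bt ct dt w₁ w₂ (l : ℂ) x / pirT pt bt dt w₁ w₂ (l : ℂ) x)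
      (nhdsWithin 0 (Ioi 0)) (nhds z)) ∧
    (∃ z : ℂ, Tendsto (fun x : ℝ =>
        (x : ℂ) ^ 2 * kapT pt qt bt ct dt w₁ w₂ (l : ℂ) x / pirT pt bt dt w₁ w₂ (l : ℂ) x)
      (nhdsWithin 0 (Ioi 0)) (nhds z))
  hC2 : ∃ z : ℝ, Tendsto (fun x : ℝ => x ^ 2 * deriv (deriv (ww w₁ w₂)) x / ww w₁ w₂ x)
    (nhdsWithin 0 (Ioi 0)) (nhds z)

/-!
Put `x = e⁻ᵗ`. Then `V = W - 1 = x w'/w` solves the Riccati equation `V' = V² - V - F` with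
`F = x² w''/w → c` by (C̃2). Trapping arguments show that `V` is eventually bounded and that every
value strictly between `liminf V` and `limsup V` is a root of `v² - v - c`, so `V → a`; a bounded
function with convergent derivative has derivative tending to `0`, whence `a² - a - c = 0` and
`W' → 0`.

For real `λ`, `π̃` is real and nonvanishing near `0`, and `Im (x ρ̃/π̃) = x w'/w + x π̃'/π̃`, so
`x π̃'/π̃ → Im ρ̃₀ - a`. By (B̃2), (B̃3a) and (B̃3b), `|π̃| ≍ x²`, so `log |π̃(e⁻ᵗ)| + 2t` is bounded
while its derivative tends to `2 - (Im ρ̃₀ - a)`; this forces `Im ρ̃₀ = a + 2 = 1 + lim W`.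
-/

open Asymptotics

lemma add_mul_sub_le_of_hasDerivAt_ge {f f' : ℝ → ℝ} {T c : ℝ}
    (hf : ∀ t ≥ T, HasDerivAt f (f' t) t) (hf' : ∀ t ≥ T, c ≤ f' t) :
    ∀ t ≥ T, f T + c * (t - T) ≤ f t := by
  intro t ht
  have hlin : ∀ s, HasDerivAt (fun s => f T + c * (s - T)) c s := fun s => by
    simpa using (((hasDerivAt_id s).sub_const T).const_mul c).const_add (f T)
  exact image_le_of_deriv_right_le_deriv_boundary
    (fun s _ => (hlin s).continuousAt.continuousWithinAt) (fun s _ => (hlin s).hasDerivWithinAt)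
    (by simp) (fun s hs => (hf s hs.1).continuousAt.continuousWithinAt)
    (fun s hs => (hf s hs.1).hasDerivWithinAt) (fun s hs => hf' s hs.1) ⟨ht, le_rfl⟩

lemma tendsto_atTop_of_hasDerivAt_ge {f f' : ℝ → ℝ} {T c : ℝ} (hc : 0 < c)
    (hf : ∀ t ≥ T, HasDerivAt f (f' t) t) (hf' : ∀ t ≥ T, c ≤ f' t) :
    Tendsto f atTop atTop :=
  tendsto_atTop_mono' atTop ((eventually_ge_atTop T).mono (add_mul_sub_le_of_hasDerivAt_ge hf hf'))
    (tendsto_atTop_add_const_left _ _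
      ((tendsto_atTop_add_const_right _ (-T) tendsto_id).const_mul_atTop hc))

lemma eq_zero_of_tendsto_deriv_of_abs_le {f f' : ℝ → ℝ} {T m C : ℝ}
    (hf : ∀ t ≥ T, HasDerivAt f (f' t) t) (hf' : Tendsto f' atTop (𝓝 m))
    (hC : ∀ᶠ t in atTop, |f t| ≤ C) : m = 0 := by
  have nonpos : ∀ {g g' : ℝ → ℝ} {μ : ℝ}, (∀ t ≥ T, HasDerivAt g (g' t) t) →
      Tendsto g' atTop (𝓝 μ) → (∀ᶠ t in atTop, g t ≤ C) → μ ≤ 0 := by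
    intro g g' μ hg hg' hgC
    by_contra! hμ
    obtain ⟨T', hT'⟩ :=
      eventually_atTop.1 (hg'.eventually (eventually_ge_nhds (half_lt_self hμ)))
    have hgtop := tendsto_atTop_of_hasDerivAt_ge (half_pos hμ) (T := max T T')
      (fun t ht => hg t (le_of_max_le_left ht)) (fun t ht => hT' t (le_of_max_le_right ht))
    obtain ⟨t, hle, hgt⟩ := (hgC.and (hgtop.eventually_gt_atTop C)).exists
    exact hle.not_gt hgt
  refine le_antisymm (nonpos hf hf' (hC.mono fun t h => (abs_le.1 h).2)) ?_
  simpa using nonpos (g := fun t => -f t) (fun t ht => (hf t ht).neg) hf'.neg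
    (hC.mono fun t h => by linarith [(abs_le.1 h).1])

lemma const_le_of_hasDerivAt_pos_of_eq {f f' : ℝ → ℝ} {T K : ℝ}
    (hf : ∀ t ≥ T, HasDerivAt f (f' t) t) (hK : ∀ t ≥ T, f t = K → 0 < f' t) (hT : K ≤ f T) :
    ∀ t ≥ T, K ≤ f t := fun _ ht =>
  image_le_of_deriv_right_lt_deriv_boundary' (f' := fun _ => 0) continuousOn_const
    (fun _ _ => hasDerivWithinAt_const _ _ _) hT
    (fun s hs => (hf s hs.1).continuousAt.continuousWithinAt)
    (fun s hs => (hf s hs.1).hasDerivWithinAt) (fun s hs h => hK s hs.1 h.symm) ⟨ht, le_rfl⟩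

lemma le_const_of_hasDerivAt_neg_of_eq {f f' : ℝ → ℝ} {T K : ℝ}
    (hf : ∀ t ≥ T, HasDerivAt f (f' t) t) (hK : ∀ t ≥ T, f t = K → f' t < 0) (hT : f T ≤ K) :
    ∀ t ≥ T, f t ≤ K := by
  intro t ht
  have := const_le_of_hasDerivAt_pos_of_eq (f := fun s => -f s) (K := -K)
    (fun s hs => (hf s hs).neg) (fun s hs h => neg_pos.2 (hK s hs (neg_inj.1 h))) (neg_le_neg hT)
    t ht
  linarith

section Riccati

variable {V F : ℝ → ℝ} {T : ℝ}

lemma riccati_lt_of_abs_le (hV : ∀ t ≥ T, HasDerivAt V (V t ^ 2 - V t - F t) t) {B : ℝ}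
    (hB : ∀ t ≥ T, |F t| ≤ B) : ∀ t ≥ T, V t < 2 * B + 2 := by
  have hB0 : 0 ≤ B := (abs_nonneg _).trans (hB T le_rfl)
  intro t ht
  by_contra! hVt
  have hFs : ∀ s ≥ t, |F s| ≤ B := fun s hs => hB s (ht.trans hs)
  have hge : ∀ s ≥ t, 2 * B + 2 ≤ V s :=
    const_le_of_hasDerivAt_pos_of_eq (fun s hs => hV s (ht.trans hs)) (fun s hs hVs => by
      rw [hVs]; nlinarith [(abs_le.1 (hFs s hs)).2]) hVt
  have hpos : ∀ s ≥ t, 0 < V s := fun s hs => by linarith [hge s hs]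
  -- `-1/V` grows at least linearly, yet stays negative
  have hinv : ∀ s ≥ t, HasDerivAt (fun u => -(V u)⁻¹) ((V s ^ 2 - V s - F s) / V s ^ 2) s :=
    fun s hs => ((hV s (ht.trans hs)).inv (hpos s hs).ne').neg.congr_deriv (by ring)
  have hder : ∀ s ≥ t, 1 / 2 ≤ (V s ^ 2 - V s - F s) / V s ^ 2 := fun s hs => by
    rw [le_div_iff₀ (pow_pos (hpos s hs) 2)]
    nlinarith [hge s hs, (abs_le.1 (hFs s hs)).2]
  obtain ⟨s, hneg, hs⟩ := ((tendsto_atTop_of_hasDerivAt_ge one_half_pos hinv hder)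
    |>.eventually_gt_atTop 0 |>.and (eventually_ge_atTop t)).exists
  linarith [inv_pos.2 (hpos s hs)]

lemma riccati_eventually_ge_of_abs_le (hV : ∀ t ≥ T, HasDerivAt V (V t ^ 2 - V t - F t) t)
    {B : ℝ} (hB : ∀ t ≥ T, |F t| ≤ B) : ∀ᶠ t in atTop, -(2 * B + 2) ≤ V t := by
  have hB0 : 0 ≤ B := (abs_nonneg _).trans (hB T le_rfl)
  obtain ⟨t₀, ht₀, hVt₀⟩ : ∃ t₀ ≥ T, -(2 * B + 2) ≤ V t₀ := by
    by_contra! hlow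
    have hder : ∀ t ≥ T, 1 ≤ V t ^ 2 - V t - F t := fun t ht => by
      nlinarith [hlow t ht, (abs_le.1 (hB t ht)).2]
    obtain ⟨t, hpos, ht⟩ := ((tendsto_atTop_of_hasDerivAt_ge one_pos hV hder)
      |>.eventually_gt_atTop 0 |>.and (eventually_ge_atTop T)).exists
    linarith [hlow t ht]
  refine eventually_atTop.2 ⟨t₀, const_le_of_hasDerivAt_pos_of_eq
    (fun t ht => hV t (ht₀.trans ht)) (fun t ht hVt => ?_) hVt₀⟩
  rw [hVt]
  nlinarith [(abs_le.1 (hB t (ht₀.trans ht))).2]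

variable {c : ℝ}

lemma riccati_isBounded (hV : ∀ t ≥ T, HasDerivAt V (V t ^ 2 - V t - F t) t)
    (hF : Tendsto F atTop (𝓝 c)) : ∃ K, ∀ᶠ t in atTop, |V t| ≤ K := by
  obtain ⟨T', hT'⟩ := eventually_atTop.1 (hF.eventually (eventually_abs_sub_lt c one_pos))
  have hV' : ∀ t ≥ max T T', HasDerivAt V (V t ^ 2 - V t - F t) t :=
    fun t ht => hV t (le_of_max_le_left ht)
  have hB : ∀ t ≥ max T T', |F t| ≤ |c| + 1 := fun t ht => by
    linarith [hT' t (le_of_max_le_right ht), abs_sub_abs_le_abs_sub (F t) c]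
  refine ⟨2 * (|c| + 1) + 2, ?_⟩
  filter_upwards [riccati_eventually_ge_of_abs_le hV' hB, eventually_ge_atTop (max T T')]
    with t hlow ht
  exact abs_le.2 ⟨hlow, (riccati_lt_of_abs_le hV' hB t ht).le⟩

lemma riccati_trap_above (hV : ∀ t ≥ T, HasDerivAt V (V t ^ 2 - V t - F t) t)
    (hF : Tendsto F atTop (𝓝 c)) {v : ℝ} (hv : c < v ^ 2 - v) :
    ∀ᶠ u in atTop, v ≤ V u → ∀ t ≥ u, v ≤ V t := by
  obtain ⟨T', hT'⟩ := eventually_atTop.1 (hF.eventually (eventually_lt_nhds hv))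
  filter_upwards [eventually_ge_atTop (max T T')] with u hu hVu
  refine const_le_of_hasDerivAt_pos_of_eq
    (fun t ht => hV t ((le_max_left _ _).trans (hu.trans ht))) (fun t ht hVt => ?_) hVu
  rw [hVt]
  linarith [hT' t ((le_max_right _ _).trans (hu.trans ht))]

lemma riccati_trap_below (hV : ∀ t ≥ T, HasDerivAt V (V t ^ 2 - V t - F t) t)
    (hF : Tendsto F atTop (𝓝 c)) {v : ℝ} (hv : v ^ 2 - v < c) :
    ∀ᶠ u in atTop, V u ≤ v → ∀ t ≥ u, V t ≤ v := by
  obtain ⟨T', hT'⟩ := eventually_atTop.1 (hF.eventually (eventually_gt_nhds hv))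
  filter_upwards [eventually_ge_atTop (max T T')] with u hu hVu
  refine le_const_of_hasDerivAt_neg_of_eq
    (fun t ht => hV t ((le_max_left _ _).trans (hu.trans ht))) (fun t ht hVt => ?_) hVu
  rw [hVt]
  linarith [hT' t ((le_max_right _ _).trans (hu.trans ht))]

lemma riccati_root_of_liminf_lt_of_lt_limsup
    (hV : ∀ t ≥ T, HasDerivAt V (V t ^ 2 - V t - F t) t) (hF : Tendsto F atTop (𝓝 c))
    {K : ℝ} (hK : ∀ᶠ t in atTop, |V t| ≤ K) {v : ℝ}
    (hlo : liminf V atTop < v) (hhi : v < limsup V atTop) : v ^ 2 - v - c = 0 := by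
  have hbdd : IsBoundedUnder (· ≤ ·) atTop V := ⟨K, hK.mono fun t h => (abs_le.1 h).2⟩
  have hbdd' : IsBoundedUnder (· ≥ ·) atTop V := ⟨-K, hK.mono fun t h => (abs_le.1 h).1⟩
  rcases lt_trichotomy (v ^ 2 - v) c with hv | hv | hv
  · obtain ⟨u, hu, hVu⟩ := ((riccati_trap_below hV hF hv).and_frequently
      (frequently_lt_of_liminf_lt hbdd.isCoboundedUnder_ge hlo)).exists
    have : limsup V atTop ≤ v := limsup_le_of_le hbdd'.isCoboundedUnder_le
      (eventually_atTop.2 ⟨u, hu hVu.le⟩)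
    linarith
  · linarith
  · obtain ⟨u, hu, hVu⟩ := ((riccati_trap_above hV hF hv).and_frequently
      (frequently_lt_of_lt_limsup hbdd'.isCoboundedUnder_le hhi)).exists
    have : v ≤ liminf V atTop := le_liminf_of_le hbdd.isCoboundedUnder_ge
      (eventually_atTop.2 ⟨u, hu hVu.le⟩)
    linarith

theorem riccati_tendsto (hV : ∀ t ≥ T, HasDerivAt V (V t ^ 2 - V t - F t) t)
    (hF : Tendsto F atTop (𝓝 c)) : ∃ a, Tendsto V atTop (𝓝 a) ∧ a ^ 2 - a - c = 0 := by
  obtain ⟨K, hK⟩ := riccati_isBounded hV hF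
  have hbdd : IsBoundedUnder (· ≤ ·) atTop V := ⟨K, hK.mono fun t h => (abs_le.1 h).2⟩
  have hbdd' : IsBoundedUnder (· ≥ ·) atTop V := ⟨-K, hK.mono fun t h => (abs_le.1 h).1⟩
  set a := liminf V atTop
  set b := limsup V atTop
  -- a quadratic polynomial cannot vanish on the whole interval `(a, b)`
  have hab : a = b := by
    by_contra hne
    have hlt : a < b := (liminf_le_limsup hbdd hbdd').lt_of_ne hne
    have root (k : ℝ) (hk₀ : 0 < k) (hk₄ : k < 4) :=
      riccati_root_of_liminf_lt_of_lt_limsup hV hF hK (v := a + k * ((b - a) / 4))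
        (by nlinarith) (by nlinarith)
    have hs : (b - a) / 4 * (2 * ((b - a) / 4)) = 0 := by
      linear_combination root 3 (by norm_num) (by norm_num)
        - 2 * root 2 (by norm_num) (by norm_num) + root 1 (by norm_num) (by norm_num)
    nlinarith
  have hVa : Tendsto V atTop (𝓝 a) := tendsto_of_liminf_eq_limsup rfl hab.symm hbdd hbdd'
  exact ⟨a, hVa, eq_zero_of_tendsto_deriv_of_abs_le hV (((hVa.pow 2).sub hVa).sub hF) hK⟩

end Riccati

lemma tendsto_comp_exp_neg_atTop {α : Type*} {l : Filter α} {f : ℝ → α} :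
    Tendsto (fun t => f (Real.exp (-t))) atTop l ↔ Tendsto f (𝓝[>] 0) l := by
  rw [tendsto_comp_neg_atTop_iff (f := fun t => f (Real.exp t)), Real.tendsto_comp_exp_atBot]

lemma tendsto_exp_neg_atTop_nhdsGT_zero : Tendsto (fun t => Real.exp (-t)) atTop (𝓝[>] 0) :=
  tendsto_comp_exp_neg_atTop.2 tendsto_id

/-- `g t = log |φ (e⁻ᵗ)| + n t` stays bounded while `g' → n - m`. -/
lemma eq_of_tendsto_mul_deriv_div_of_isTheta {φ φ' : ℝ → ℝ} {n : ℕ} {m : ℝ}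
    (hφ : ∀ᶠ x in 𝓝[>] 0, HasDerivAt φ (φ' x) x) (hΘ : φ =Θ[𝓝[>] 0] fun x => x ^ n)
    (hm : Tendsto (fun x => x * φ' x / φ x) (𝓝[>] 0) (𝓝 m)) : m = n := by
  obtain ⟨C₂, hC₂⟩ := hΘ.1.bound
  obtain ⟨C₁, hC₁⟩ := hΘ.2.bound
  have hx : ∀ᶠ t in atTop, 0 < Real.exp (-t) ∧
      HasDerivAt φ (φ' (Real.exp (-t))) (Real.exp (-t)) ∧
      ‖φ (Real.exp (-t))‖ ≤ C₂ * ‖Real.exp (-t) ^ n‖ ∧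
      ‖Real.exp (-t) ^ n‖ ≤ C₁ * ‖φ (Real.exp (-t))‖ :=
    tendsto_exp_neg_atTop_nhdsGT_zero.eventually
      (eventually_mem_nhdsWithin.and (hφ.and (hC₂.and hC₁)))
  set g : ℝ → ℝ := fun t => Real.log (φ (Real.exp (-t))) + n * t
  have hg : ∀ᶠ t in atTop,
      HasDerivAt g (-(Real.exp (-t) * φ' (Real.exp (-t)) / φ (Real.exp (-t))) + n) t ∧
      |g t| ≤ |Real.log C₁| + |Real.log C₂| := by
    filter_upwards [hx] with t ⟨hxpos, hder, hup, hlow⟩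
    set x := Real.exp (-t)
    have hxn : ‖x ^ n‖ = Real.exp (-(n * t)) := by
      rw [norm_pow, Real.norm_of_nonneg hxpos.le, ← Real.exp_nat_mul]
      ring_nf
    rw [hxn] at hup hlow
    obtain ⟨hC₁, hφx⟩ := (pos_and_pos_or_neg_and_neg_of_mul_pos
      ((Real.exp_pos _).trans_le hlow)).resolve_right fun h => (norm_nonneg _).not_gt h.2
    have hC₂ : 0 < C₂ := pos_of_mul_pos_left (hφx.trans_le hup) (Real.exp_pos _).le
    have hlog_up := Real.log_le_log hφx hup
    have hlog_low := Real.log_le_log (Real.exp_pos _) hlow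
    rw [Real.log_mul hC₂.ne' (Real.exp_pos _).ne', Real.log_exp] at hlog_up
    rw [Real.log_mul hC₁.ne' hφx.ne', Real.log_exp] at hlog_low
    rw [Real.norm_eq_abs, Real.log_abs] at hlog_up hlog_low
    have hexp : HasDerivAt (fun t => Real.exp (-t)) (x * -1) t := (hasDerivAt_neg t).exp
    refine ⟨(((hder.comp t hexp).log (norm_pos_iff.1 hφx)).add
      ((hasDerivAt_id t).const_mul (n : ℝ))).congr_deriv (by simp only [Function.comp]; ring),
      abs_le.2 ⟨?_, ?_⟩⟩
    · linarith [le_abs_self (Real.log C₁), abs_nonneg (Real.log C₂)]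
    · linarith [le_abs_self (Real.log C₂), abs_nonneg (Real.log C₁)]
  obtain ⟨T, hT⟩ := eventually_atTop.1 hg
  have := eq_zero_of_tendsto_deriv_of_abs_le (fun t ht => (hT t ht).1)
    ((tendsto_comp_exp_neg_atTop.2 hm).neg.add_const (n : ℝ))
    ((eventually_ge_atTop T).mono fun t ht => (hT t ht).2)
  linarith

lemma exists_abs_add_one_le_mul_abs_sub {α : Type*} {l : Filter α} {f : α → ℝ} {L : EReal}
    (hf : Tendsto (fun x => (f x : EReal)) l (𝓝 L)) {a : ℝ} (ha : (a : EReal) ≠ L) :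
    ∃ C > 0, ∀ᶠ x in l, |f x| + 1 ≤ C * |f x - a| := by
  have hlarge : ∀ y : ℝ, 2 * |a| + 1 ≤ |y| → |y| + 1 ≤ 2 * |y - a| := fun y hy => by
    linarith [abs_sub_abs_le_abs_sub y a]
  induction L with
  | bot =>
    refine ⟨2, two_pos, (EReal.tendsto_nhds_bot_iff_real.1 hf (-(2 * |a| + 1))).mono
      fun x hx => hlarge _ ?_⟩
    have hx' : f x < -(2 * |a| + 1) := by exact_mod_cast hx
    rw [abs_of_neg (a := f x) (by linarith [abs_nonneg a])]
    linarith
  | top =>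
    refine ⟨2, two_pos, (EReal.tendsto_nhds_top_iff_real.1 hf (2 * |a| + 1)).mono
      fun x hx => hlarge _ ?_⟩
    have hx' : 2 * |a| + 1 < f x := by exact_mod_cast hx
    rw [abs_of_pos (a := f x) (by linarith [abs_nonneg a])]
    linarith
  | coe L₀ =>
    set η := |a - L₀|
    have hη : 0 < η := abs_pos.2 (sub_ne_zero.2 fun h => ha (by rw [h]))
    refine ⟨2 * (|L₀| + η + 1) / η, by positivity, ?_⟩
    filter_upwards [(EReal.tendsto_coe.1 hf).eventually
      (eventually_abs_sub_lt L₀ (half_pos hη))] with x hx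
    have hfar : η / 2 ≤ |f x - a| := by
      linarith [abs_sub_le a (f x) L₀, abs_sub_comm a (f x)]
    calc |f x| + 1 ≤ 2 * (|L₀| + η + 1) / η * (η / 2) := by
          field_simp
          linarith [abs_sub_abs_le_abs_sub (f x) L₀]
      _ ≤ 2 * (|L₀| + η + 1) / η * |f x - a| := by gcongr

lemma differentiableAt_of_contDiffOn_Ioc {E : Type*} [NormedAddCommGroup E] [NormedSpace ℝ E]
    {f : ℝ → E} {n : WithTop ℕ∞} (hf : ContDiffOn ℝ n f (Ioc 0 1)) (hn : n ≠ 0) {x : ℝ}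
    (hx : x ∈ Ioo 0 1) : DifferentiableAt ℝ f x :=
  (hf.contDiffAt (mem_of_superset (Ioo_mem_nhds hx.1 hx.2) Ioo_subset_Ioc_self)).differentiableAt
    hn

section PiReal

variable {pt qt dt : ℝ → ℝ} {bt ct : ℝ → ℂ} {w₁ w₂ : ℝ → ℝ}

/-- `π̃(·, λ)` for real `λ`, as a real function. -/
def piR (pt : ℝ → ℝ) (bt : ℝ → ℂ) (dt w₁ w₂ : ℝ → ℝ) (l x : ℝ) : ℝ :=
  w₂ x / w₁ x * pt x - ‖bt x‖ ^ 2 / (dt x - l)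

lemma pirT_ofReal (l x : ℝ) : pirT pt bt dt w₁ w₂ (l : ℂ) x = piR pt bt dt w₁ w₂ l x := by
  simp only [pirT, piR]
  push_cast
  ring

lemma AssAT.w₁_ne_zero (hA : AssAT pt qt dt bt ct w₁ w₂) {x : ℝ} (hx : x ∈ Ioo 0 1) :
    w₁ x ≠ 0 :=
  left_ne_zero_of_mul (hA.hwpos x hx).ne'

lemma AssAT.w₂_ne_zero (hA : AssAT pt qt dt bt ct w₁ w₂) {x : ℝ} (hx : x ∈ Ioo 0 1) :
    w₂ x ≠ 0 :=
  right_ne_zero_of_mul (hA.hwpos x hx).ne'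

lemma piR_ne_zero (hA : AssAT pt qt dt bt ct w₁ w₂) {l : ℝ}
    (hl : l ∉ closure (DelT pt bt dt w₁ w₂ '' Ioc 0 1)) {x : ℝ} (hx : x ∈ Ioo 0 1) :
    piR pt bt dt w₁ w₂ l x ≠ 0 := by
  have hp := hA.hppos x (Ioo_subset_Ioc_self hx)
  have h₁ := hA.w₁_ne_zero hx
  have h₂ := hA.w₂_ne_zero hx
  intro h0
  by_cases hdx : dt x = l
  -- for `d̃(x) = λ` the second term of `π̃` is `0` by the convention `y / 0 = 0`
  · rw [piR, hdx, sub_self, div_zero, sub_zero] at h0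
    exact mul_ne_zero (div_ne_zero h₂ h₁) hp.ne' h0
  · refine hl (subset_closure ⟨x, Ioo_subset_Ioc_self hx, ?_⟩)
    have hdx' : dt x - l ≠ 0 := sub_ne_zero.2 hdx
    rw [piR, sub_eq_zero, div_mul_eq_mul_div, div_eq_div_iff h₁ hdx'] at h0
    rw [DelT]
    field_simp
    linear_combination h0

lemma AssAT.differentiableAt_piR (hA : AssAT pt qt dt bt ct w₁ w₂) {l x : ℝ}
    (hx : x ∈ Ioo 0 1) (hdx : dt x ≠ l) : DifferentiableAt ℝ (piR pt bt dt w₁ w₂ l) x := by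
  have h2 : (2 : WithTop ℕ∞) ≠ 0 := two_ne_zero
  have hb := differentiableAt_of_contDiffOn_Ioc hA.hb h2 hx
  exact (((differentiableAt_of_contDiffOn_Ioc hA.hw2 h2 hx).div
    (differentiableAt_of_contDiffOn_Ioc hA.hw1 h2 hx) (hA.w₁_ne_zero hx)).mul
    (differentiableAt_of_contDiffOn_Ioc hA.hp h2 hx)).sub ((hb.norm_sq ℂ).div
    ((differentiableAt_of_contDiffOn_Ioc hA.hd h2 hx).sub_const l) (sub_ne_zero.2 hdx))

lemma AssAT.contDiffOn_ww (hA : AssAT pt qt dt bt ct w₁ w₂) :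
    ContDiffOn ℝ 2 (ww w₁ w₂) (Ioo 0 1) :=
  (hA.hw1.mul hA.hw2).mono Ioo_subset_Ioc_self

lemma AssAT.hasDerivAt_ww (hA : AssAT pt qt dt bt ct w₁ w₂) {x : ℝ} (hx : x ∈ Ioo 0 1) :
    HasDerivAt (ww w₁ w₂) (deriv (ww w₁ w₂) x) x :=
  ((hA.contDiffOn_ww.contDiffAt (Ioo_mem_nhds hx.1 hx.2)).differentiableAt
    two_ne_zero).hasDerivAt

lemma AssAT.hasDerivAt_deriv_ww (hA : AssAT pt qt dt bt ct w₁ w₂) {x : ℝ}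
    (hx : x ∈ Ioo 0 1) : HasDerivAt (deriv (ww w₁ w₂)) (deriv (deriv (ww w₁ w₂)) x) x :=
  (((hA.contDiffOn_ww.deriv_of_isOpen isOpen_Ioo (m := 1) le_rfl).contDiffAt
    (Ioo_mem_nhds hx.1 hx.2)).differentiableAt one_ne_zero).hasDerivAt

lemma AssAT.hasDerivAt_WT (hA : AssAT pt qt dt bt ct w₁ w₂) {t : ℝ} (ht : 0 < t) :
    HasDerivAt (WT w₁ w₂) ((WT w₁ w₂ t - 1) ^ 2 - (WT w₁ w₂ t - 1) -
      Real.exp (-t) ^ 2 * deriv (deriv (ww w₁ w₂)) (Real.exp (-t)) / ww w₁ w₂ (Real.exp (-t)))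
      t := by
  have hx : Real.exp (-t) ∈ Ioo 0 1 := ⟨Real.exp_pos _, Real.exp_lt_one_iff.2 (neg_neg_of_pos ht)⟩
  have hw := (hA.hwpos _ hx).ne'
  have hV := (((hasDerivAt_id _).mul (hA.hasDerivAt_deriv_ww hx)).div (hA.hasDerivAt_ww hx)
    hw).comp t (hasDerivAt_neg t).exp
  refine (hV.const_add 1).congr_deriv ?_
  simp only [WT, id, Pi.mul_apply]
  field_simp
  ring

lemma piR_sub_piR {l l₀ x : ℝ} (hl : dt x ≠ l) (hl₀ : dt x ≠ l₀) :
    piR pt bt dt w₁ w₂ l x - piR pt bt dt w₁ w₂ l₀ x =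
      ‖bt x‖ ^ 2 * (l₀ - l) / ((dt x - l) * (dt x - l₀)) := by
  have := sub_ne_zero.2 hl
  have := sub_ne_zero.2 hl₀
  simp only [piR]
  field_simp
  ring

lemma ne_of_abs_add_one_le_mul_abs_sub {y k c : ℝ} (h : |y| + 1 ≤ c * |y - k|) : y ≠ k := by
  rintro rfl
  rw [sub_self, abs_zero, mul_zero] at h
  linarith [abs_nonneg y]

lemma AssBT.eventually_dt_ne {L : EReal} (hB : AssBT pt qt dt bt ct w₁ w₂ L) {l : ℝ}
    (hl : (l : EReal) ≠ L) : ∀ᶠ x in 𝓝[>] 0, dt x ≠ l :=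
  have ⟨_, _, hC⟩ := exists_abs_add_one_le_mul_abs_sub hB.hB1 hl
  hC.mono fun _ => ne_of_abs_add_one_le_mul_abs_sub

lemma piR_sub_piR_isBigO_sq {L : EReal} (hB : AssBT pt qt dt bt ct w₁ w₂ L) {l l₀ : ℝ}
    (hl : (l : EReal) ≠ L) (hl₀ : (l₀ : EReal) ≠ L) :
    (fun x => piR pt bt dt w₁ w₂ l x - piR pt bt dt w₁ w₂ l₀ x) =O[𝓝[>] 0] fun x => x ^ 2 := by
  obtain ⟨β, -, γ, -, hbc⟩ := hB.hB2
  obtain ⟨C, -, hC⟩ := exists_abs_add_one_le_mul_abs_sub hB.hB1 hl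
  obtain ⟨C₀, -, hC₀⟩ := exists_abs_add_one_le_mul_abs_sub hB.hB1 hl₀
  refine IsBigO.of_bound (β ^ 2 * |l₀ - l| * (C * C₀)) ?_
  filter_upwards [Ioo_mem_nhdsGT one_pos, hC, hC₀] with x hx hCx hC₀x
  have hb : ‖bt x‖ ≤ β * x * (|dt x| + 1) := by
    have := (hbc x (Ioo_subset_Ioc_self hx)).1
    rw [div_le_iff₀ hx.1] at this
    linarith
  have hprod : (|dt x| + 1) ^ 2 ≤ C * C₀ * (|dt x - l| * |dt x - l₀|) :=
    calc (|dt x| + 1) ^ 2 = (|dt x| + 1) * (|dt x| + 1) := sq _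
      _ ≤ C * |dt x - l| * (C₀ * |dt x - l₀|) :=
        mul_le_mul hCx hC₀x (by positivity) ((by positivity : (0 : ℝ) ≤ |dt x| + 1).trans hCx)
      _ = _ := by ring
  have hl' := ne_of_abs_add_one_le_mul_abs_sub hCx
  have hl₀' := ne_of_abs_add_one_le_mul_abs_sub hC₀x
  rw [piR_sub_piR hl' hl₀', Real.norm_eq_abs, abs_div, abs_mul, abs_mul,
    abs_of_nonneg (by positivity : (0 : ℝ) ≤ ‖bt x‖ ^ 2), Real.norm_of_nonneg (sq_nonneg x),
    div_le_iff₀ (mul_pos (abs_pos.2 (sub_ne_zero.2 hl')) (abs_pos.2 (sub_ne_zero.2 hl₀')))]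
  calc ‖bt x‖ ^ 2 * |l₀ - l| ≤ (β * x * (|dt x| + 1)) ^ 2 * |l₀ - l| := by gcongr
    _ = β ^ 2 * x ^ 2 * |l₀ - l| * (|dt x| + 1) ^ 2 := by ring
    _ ≤ β ^ 2 * x ^ 2 * |l₀ - l| * (C * C₀ * (|dt x - l| * |dt x - l₀|)) := by gcongr
    _ = β ^ 2 * |l₀ - l| * (C * C₀) * x ^ 2 * (|dt x - l| * |dt x - l₀|) := by ring

lemma piR_isBigO_sq {L : EReal} (hB : AssBT pt qt dt bt ct w₁ w₂ L) {l : ℝ}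
    (hl : (l : EReal) ≠ L) : piR pt bt dt w₁ w₂ l =O[𝓝[>] 0] fun x => x ^ 2 := by
  obtain ⟨l₀, hl₀, x₀, hx₀, M, hM⟩ := hB.hB3a
  have h₀ : piR pt bt dt w₁ w₂ l₀ =O[𝓝[>] 0] fun x => x ^ 2 := by
    refine IsBigO.of_bound M ?_
    filter_upwards [Ioo_mem_nhdsGT hx₀.1] with x hx
    have := hM x (Ioo_subset_Ioc_self hx)
    rw [pirT_ofReal, Complex.norm_real, div_le_iff₀ (pow_pos hx.1 2)] at this
    rwa [Real.norm_of_nonneg (sq_nonneg x)]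
  exact ((piR_sub_piR_isBigO_sq hB hl hl₀).add h₀).congr_left fun x => sub_add_cancel _ _

lemma sq_isBigO_piR {L : EReal} (hA : AssAT pt qt dt bt ct w₁ w₂)
    (hB : AssBT pt qt dt bt ct w₁ w₂ L) {l : ℝ}
    (hl₁ : l ∉ closure (DelT pt bt dt w₁ w₂ '' Ioc 0 1)) (hl₂ : (l : EReal) ≠ L) :
    (fun x => x ^ 2) =O[𝓝[>] 0] piR pt bt dt w₁ w₂ l := by
  obtain ⟨x₀, hx₀, M, hM⟩ := hB.hB3b l hl₁ hl₂
  refine IsBigO.of_bound M ?_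
  filter_upwards [Ioo_mem_nhdsGT hx₀.1] with x hx
  have hπ := piR_ne_zero hA hl₁ ⟨hx.1, hx.2.trans hx₀.2⟩
  have := (hM x (Ioo_subset_Ioc_self hx)).1
  rw [pirT_ofReal, Complex.norm_real, div_le_iff₀ (norm_pos_iff.2 hπ)] at this
  rwa [Real.norm_of_nonneg (sq_nonneg x)]

lemma AssAT.deriv_pirT (hA : AssAT pt qt dt bt ct w₁ w₂) {l x : ℝ} (hx : x ∈ Ioo 0 1)
    (hdx : dt x ≠ l) :
    deriv (fun s => pirT pt bt dt w₁ w₂ (l : ℂ) s) x = deriv (piR pt bt dt w₁ w₂ l) x := by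
  rw [funext (pirT_ofReal (pt := pt) (bt := bt) (dt := dt) (w₁ := w₁) (w₂ := w₂) l)]
  exact (hA.differentiableAt_piR hx hdx).hasDerivAt.ofReal_comp.deriv

lemma AssAT.im_mul_rhoT_div_pirT (hA : AssAT pt qt dt bt ct w₁ w₂) {l x : ℝ}
    (hx : x ∈ Ioo 0 1) (hdx : dt x ≠ l) (hπ : piR pt bt dt w₁ w₂ l x ≠ 0) :
    ((x : ℂ) * rhoT pt bt ct dt w₁ w₂ (l : ℂ) x / pirT pt bt dt w₁ w₂ (l : ℂ) x).im =
      x * deriv (ww w₁ w₂) x / ww w₁ w₂ x +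
        x * deriv (piR pt bt dt w₁ w₂ l) x / piR pt bt dt w₁ w₂ l x := by
  have hw := (hA.hwpos x hx).ne'
  have hd : deriv (fun y => (ww w₁ w₂ y : ℂ) * pirT pt bt dt w₁ w₂ (l : ℂ) y) x =
      ((deriv (ww w₁ w₂) x * piR pt bt dt w₁ w₂ l x +
        ww w₁ w₂ x * deriv (piR pt bt dt w₁ w₂ l) x : ℝ) : ℂ) := by
    have : (fun y => (ww w₁ w₂ y : ℂ) * pirT pt bt dt w₁ w₂ (l : ℂ) y) =
        fun y => ((ww w₁ w₂ y * piR pt bt dt w₁ w₂ l y : ℝ) : ℂ) := by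
      funext y
      rw [pirT_ofReal]
      push_cast
      ring
    rw [this]
    exact ((hA.hasDerivAt_ww hx).mul (hA.differentiableAt_piR hx hdx).hasDerivAt).ofReal_comp.deriv
  have hreal : -(2 * ((bt x * (starRingEnd ℂ) (ct x)).im : ℂ)) / ((dt x : ℂ) - l) =
      ((-(2 * (bt x * (starRingEnd ℂ) (ct x)).im) / (dt x - l) : ℝ) : ℂ) := by
    push_cast
    ring
  rw [rhoT, hd, pirT_ofReal, hreal]
  generalize -(2 * (bt x * (starRingEnd ℂ) (ct x)).im) / (dt x - l) = A
  simp only [Complex.ofReal_add, Complex.ofReal_mul, Complex.div_ofReal_im, Complex.mul_im,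
    Complex.ofReal_re, Complex.add_im, Complex.ofReal_im, Complex.mul_re, Complex.I_re,
    Complex.inv_re, Complex.normSq_ofReal, div_self_mul_self', zero_mul, Complex.I_im,
    Complex.inv_im, neg_zero, zero_div, mul_zero, sub_self, add_zero, one_mul, zero_add,
    Complex.add_re, sub_zero]
  field_simp

lemma AssAT.tendsto_mul_deriv_pirT_div (hA : AssAT pt qt dt bt ct w₁ w₂) {l m : ℝ}
    (hnear : ∀ᶠ x in 𝓝[>] 0, x ∈ Ioo 0 1 ∧ dt x ≠ l)
    (h : Tendsto (fun x => x * deriv (piR pt bt dt w₁ w₂ l) x / piR pt bt dt w₁ w₂ l x)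
      (𝓝[>] 0) (𝓝 m)) :
    Tendsto (fun x : ℝ => (x : ℂ) * deriv (fun s => pirT pt bt dt w₁ w₂ (l : ℂ) s) x /
      pirT pt bt dt w₁ w₂ (l : ℂ) x) (𝓝[>] 0) (𝓝 (m : ℂ)) := by
  refine ((Complex.continuous_ofReal.tendsto _).comp h).congr' ?_
  filter_upwards [hnear] with x ⟨hx, hdx⟩
  rw [Function.comp_apply, hA.deriv_pirT hx hdx, pirT_ofReal]
  push_cast
  rfl

lemma AssAT.tendsto_deriv_WT (hA : AssAT pt qt dt bt ct w₁ w₂) {a c : ℝ}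
    (hV : Tendsto (fun t => WT w₁ w₂ t - 1) atTop (𝓝 a))
    (hF : Tendsto (fun x => x ^ 2 * deriv (deriv (ww w₁ w₂)) x / ww w₁ w₂ x) (𝓝[>] 0) (𝓝 c))
    (hroot : a ^ 2 - a - c = 0) : Tendsto (deriv (WT w₁ w₂)) atTop (𝓝 0) := by
  refine (hroot ▸ ((hV.pow 2).sub hV).sub (tendsto_comp_exp_neg_atTop.2 hF)).congr' ?_
  filter_upwards [eventually_gt_atTop 0] with t ht
  exact (hA.hasDerivAt_WT ht).deriv.symm

end PiReal

/-- **Lemma 6.4.** Under Assumptions (Ã), (B̃), (C̃), for every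
`λ ∈ ℝ \ (closure(Δ̃((0,1])) ∪ {d̃₀})`: `x (∂π̃/∂x)/π̃ → 2` as `x → 0+`; consequently
`W` has a finite limit at `∞`, `W′ → 0` at `∞`, and `Im ρ̃₀(λ) = 1 + lim W`. -/
theorem tilde_limits (pt qt dt : ℝ → ℝ) (bt ct : ℝ → ℂ) (w₁ w₂ : ℝ → ℝ) (L : EReal)
    (hA : AssAT pt qt dt bt ct w₁ w₂) (hB : AssBT pt qt dt bt ct w₁ w₂ L)
    (hC : AssCT pt qt dt bt ct w₁ w₂ L)
    (l : ℝ) (hl1 : l ∉ closure (DelT pt bt dt w₁ w₂ '' Ioc 0 1)) (hl2 : (l : EReal) ≠ L) :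
    Tendsto (fun x : ℝ =>
        (x : ℂ) * deriv (fun s => pirT pt bt dt w₁ w₂ (l : ℂ) s) x /
          pirT pt bt dt w₁ w₂ (l : ℂ) x)
      (nhdsWithin 0 (Ioi 0)) (nhds 2) ∧
    ∃ Wl : ℝ, Tendsto (WT w₁ w₂) atTop (nhds Wl) ∧
      Tendsto (deriv (WT w₁ w₂)) atTop (nhds 0) ∧
      ∀ z : ℂ, Tendsto (fun x : ℝ =>
          (x : ℂ) * rhoT pt bt ct dt w₁ w₂ (l : ℂ) x / pirT pt bt dt w₁ w₂ (l : ℂ) x)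
        (nhdsWithin 0 (Ioi 0)) (nhds z) → z.im = 1 + Wl := by
  obtain ⟨⟨ρ₀, hρ₀⟩, -⟩ := hC.hC1 l hl1 hl2
  obtain ⟨c, hc⟩ := hC.hC2
  have hnear : ∀ᶠ x in 𝓝[>] 0, x ∈ Ioo 0 1 ∧ dt x ≠ l :=
    Filter.Eventually.and (Ioo_mem_nhdsGT one_pos) (hB.eventually_dt_ne hl2)
  obtain ⟨a, hVa, hroot⟩ := riccati_tendsto (T := 1)
    (fun t ht => (hA.hasDerivAt_WT (one_pos.trans_le ht)).sub_const 1)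
    (tendsto_comp_exp_neg_atTop.2 hc)
  have hw : Tendsto (fun x => x * deriv (ww w₁ w₂) x / ww w₁ w₂ x) (𝓝[>] 0) (𝓝 a) :=
    tendsto_comp_exp_neg_atTop.1 (by simpa [WT] using hVa)
  have hπ : Tendsto (fun x => x * deriv (piR pt bt dt w₁ w₂ l) x / piR pt bt dt w₁ w₂ l x)
      (𝓝[>] 0) (𝓝 (ρ₀.im - a)) := by
    refine (((Complex.continuous_im.tendsto ρ₀).comp hρ₀).sub hw).congr' ?_
    filter_upwards [hnear] with x ⟨hx, hdx⟩
    simp only [Function.comp, hA.im_mul_rhoT_div_pirT hx hdx (piR_ne_zero hA hl1 hx)]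
    ring
  have h2 : ρ₀.im - a = 2 := by
    exact_mod_cast eq_of_tendsto_mul_deriv_div_of_isTheta
      (hnear.mono fun x ⟨hx, hdx⟩ => (hA.differentiableAt_piR hx hdx).hasDerivAt)
      ⟨piR_isBigO_sq hB hl2, sq_isBigO_piR hA hB hl1 hl2⟩ hπ
  refine ⟨by simpa [h2] using hA.tendsto_mul_deriv_pirT_div hnear hπ, 1 + a,
    by simpa using hVa.const_add 1, hA.tendsto_deriv_WT hVa hc hroot, fun z hz => ?_⟩
  rw [tendsto_nhds_unique hz hρ₀]
  linarith

end PaperEss
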